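/- For 1 ≤ s ≤ m-1 and k ≥ 1, the subspace xH^s_{k-1} + x*H^s_{k-1} of polynomial forms decomposes as the direct sum (x+x*)H^s_{k-1} ⊕ M_{s,k}, where M_{s,k} = [(k-1+m-s)x* - (k-1+s)x]H^s_{k-1}. -/

import Mathlib

open MvPolynomial Finset

noncomputable section

/-- Polynomial differential forms on ℝ^m: a coefficient polynomial for each
increasing multi-index `I ⊆ {1,…,m}` (representing `dx_I`). -/
abbrev PForm (m : ℕ) := Finset (Fin m) → MvPolynomial (Fin m) ℝ

/-- The sign `(-1)^{#{i ∈ I : i < j}}`. -/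
def sgn (m : ℕ) (j : Fin m) (I : Finset (Fin m)) : ℝ :=
  (-1 : ℝ) ^ (I.filter (fun i => i < j)).card

/-- Exterior multiplication `dx_j ∧ ·`. -/
def wedgeOp (m : ℕ) (j : Fin m) : PForm m →ₗ[ℝ] PForm m where
  toFun P I := if j ∈ I then sgn m j I • P (I.erase j) else 0
  map_add' P Q := by
    funext I; by_cases h : j ∈ I <;> simp [h, smul_add]
  map_smul' c P := by
    funext I; by_cases h : j ∈ I <;> simp [h, smul_smul, mul_comm]

/-- Contraction (interior product) `dx_j ⌟ ·`. -/
def contrOp (m : ℕ) (j : Fin m) : PForm m →ₗ[ℝ] PForm m where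
  toFun P I := if j ∈ I then 0 else sgn m j I • P (insert j I)
  map_add' P Q := by
    funext I; by_cases h : j ∈ I <;> simp [h, smul_add]
  map_smul' c P := by
    funext I; by_cases h : j ∈ I <;> simp [h, smul_smul, mul_comm]

/-- Multiplication of the coefficients by the variable `x_j`. -/
def mulXOp (m : ℕ) (j : Fin m) : PForm m →ₗ[ℝ] PForm m where
  toFun P I := X j * P I
  map_add' P Q := by funext I; simp [mul_add]
  map_smul' c P := by funext I; simp [mul_smul_comm]

/-- Partial derivative `∂_{x_j}` of the coefficients. -/
def pderivOp (m : ℕ) (j : Fin m) : PForm m →ₗ[ℝ] PForm m where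
  toFun P I := pderiv j (P I)
  map_add' P Q := by funext I; simp
  map_smul' c P := by funext I; simp

/-- `x = -∑_j x_j dx_j ∧`. -/
def xOp (m : ℕ) : PForm m →ₗ[ℝ] PForm m := - ∑ j, mulXOp m j ∘ₗ wedgeOp m j

/-- `x* = ∑_j x_j dx_j ⌟`. -/
def xStarOp (m : ℕ) : PForm m →ₗ[ℝ] PForm m := ∑ j, mulXOp m j ∘ₗ contrOp m j

/-- The de Rham differential `d = ∑_j ∂_{x_j} dx_j ∧`. -/
def dOp (m : ℕ) : PForm m →ₗ[ℝ] PForm m := ∑ j, wedgeOp m j ∘ₗ pderivOp m j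

/-- Its formal adjoint `d* = -∑_j ∂_{x_j} dx_j ⌟`. -/
def dStarOp (m : ℕ) : PForm m →ₗ[ℝ] PForm m := - ∑ j, contrOp m j ∘ₗ pderivOp m j

/-- The Euler operator `E = ∑_j x_j ∂_{x_j}`. -/
def eulerOp (m : ℕ) : PForm m →ₗ[ℝ] PForm m := ∑ j, mulXOp m j ∘ₗ pderivOp m j

/-- The skew Euler operator `Ê = ∑_j (dx_j∧)(dx_j⌟)`. -/
def skewEulerOp (m : ℕ) : PForm m →ₗ[ℝ] PForm m := ∑ j, wedgeOp m j ∘ₗ contrOp m j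

/-- The componentwise Laplacian `Δ = ∑_j ∂²_{x_j}`. -/
def lapOp (m : ℕ) : PForm m →ₗ[ℝ] PForm m := ∑ j, pderivOp m j ∘ₗ pderivOp m j

/-- Multiplication by `r² = x_1² + ⋯ + x_m²`. -/
def r2Op (m : ℕ) : PForm m →ₗ[ℝ] PForm m := ∑ j, mulXOp m j ∘ₗ mulXOp m j

/-- `P` is an `s`-form: only components `dx_I` with `|I| = s` occur. -/
def IsSForm (m s : ℕ) (P : PForm m) : Prop := ∀ I : Finset (Fin m), I.card ≠ s → P I = 0

/-- All coefficients of `P` are homogeneous polynomials of degree `k`. -/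
def IsHomForm (m k : ℕ) (P : PForm m) : Prop := ∀ I : Finset (Fin m), (P I).IsHomogeneous k

/-- `H^s_k`: homogeneous polynomial `s`-forms of degree `k` solving the
Hodge–de Rham system `dP = 0`, `d*P = 0`. -/
def Hset (m s k : ℕ) : Set (PForm m) :=
  {P | IsSForm m s P ∧ IsHomForm m k P ∧ dOp m P = 0 ∧ dStarOp m P = 0}

/-- `ℳ_k`: homogeneous degree-`k` polynomial forms with `(d + d*)P = 0`. -/
def Mk (m k : ℕ) : Set (PForm m) :=
  {P | IsHomForm m k P ∧ (dOp m + dStarOp m) P = 0}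

/-- `M_{s,k} = [(k-1+m-s)x* - (k-1+s)x] H^s_{k-1}`. -/
def Mset (m s k : ℕ) : Set (PForm m) :=
  (⇑(((k : ℝ) - 1 + m - s) • xStarOp m - ((k : ℝ) - 1 + s) • xOp m)) '' Hset m s (k - 1)

end
noncomputable section AuxOps
variable {m : ℕ}

lemma sgn_sq (j : Fin m) (I : Finset (Fin m)) : sgn m j I * sgn m j I = 1 := by
  simp [sgn, ← mul_pow]

lemma sgn_erase_self (j : Fin m) (I : Finset (Fin m)) : sgn m j (I.erase j) = sgn m j I := by
  unfold sgn
  congr 2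
  ext i
  simp only [mem_filter, mem_erase]
  exact ⟨fun h => ⟨h.1.2, h.2⟩, fun h => ⟨⟨ne_of_lt h.2, h.1⟩, h.2⟩⟩

lemma sgn_insert_self (j : Fin m) (I : Finset (Fin m)) : sgn m j (insert j I) = sgn m j I := by
  unfold sgn
  rw [filter_insert, if_neg (lt_irrefl j)]

lemma sgn_erase (j l : Fin m) {I : Finset (Fin m)} (hj : j ∈ I) :
    sgn m l (I.erase j) = (if j < l then -1 else 1) * sgn m l I := by
  have hfe : (I.erase j).filter (fun i => i < l) = (I.filter (fun i => i < l)).erase j := by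
    ext i; simp only [mem_filter, mem_erase]; tauto
  by_cases hjl : j < l
  · have hmem : j ∈ I.filter (fun i => i < l) := mem_filter.2 ⟨hj, hjl⟩
    have hc := Finset.card_erase_add_one hmem
    unfold sgn
    rw [hfe, if_pos hjl, ← hc, pow_succ]
    ring
  · have : (I.erase j).filter (fun i => i < l) = I.filter (fun i => i < l) := by
      rw [hfe]
      apply Finset.erase_eq_of_notMem
      simp [hjl]
    unfold sgn
    rw [this, if_neg hjl, one_mul]

lemma sgn_insert (j l : Fin m) {I : Finset (Fin m)} (hj : j ∉ I) :
    sgn m l (insert j I) = (if j < l then -1 else 1) * sgn m l I := by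
  have hj' : j ∉ I.filter (fun i => i < l) := fun h => hj (mem_filter.1 h).1
  unfold sgn
  rw [filter_insert]
  by_cases hjl : j < l
  · rw [if_pos hjl, if_pos hjl, Finset.card_insert_of_notMem hj', pow_succ]
    ring
  · rw [if_neg hjl, if_neg hjl, one_mul]

lemma wedge_apply (j : Fin m) (P : PForm m) (I : Finset (Fin m)) :
    wedgeOp m j P I = if j ∈ I then sgn m j I • P (I.erase j) else 0 := rfl

lemma contr_apply (j : Fin m) (P : PForm m) (I : Finset (Fin m)) :
    contrOp m j P I = if j ∈ I then 0 else sgn m j I • P (insert j I) := rfl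

lemma mulX_apply (j : Fin m) (P : PForm m) (I : Finset (Fin m)) :
    mulXOp m j P I = X j * P I := rfl

lemma pderivOp_apply (j : Fin m) (P : PForm m) (I : Finset (Fin m)) :
    pderivOp m j P I = pderiv j (P I) := rfl

lemma wedge_wedge_self (j : Fin m) (P : PForm m) : wedgeOp m j (wedgeOp m j P) = 0 := by
  funext I
  simp [wedge_apply]

lemma contr_contr_self (j : Fin m) (P : PForm m) : contrOp m j (contrOp m j P) = 0 := by
  funext I
  simp [contr_apply]

lemma wedge_wedge (j l : Fin m) (P : PForm m) :
    wedgeOp m j (wedgeOp m l P) = - wedgeOp m l (wedgeOp m j P) := by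
  rcases eq_or_ne j l with rfl | hne
  · simp [wedge_wedge_self]
  funext I
  by_cases hj : j ∈ I <;> by_cases hl : l ∈ I <;>
    simp only [wedge_apply, Pi.neg_apply, hj, hl, if_pos, if_neg, mem_erase, hne, hne.symm,
      ne_eq, not_false_eq_true, and_true, true_and, if_true, if_false, smul_zero, neg_zero,
      smul_ite]
  rw [Finset.erase_right_comm, smul_smul, smul_smul, ← neg_smul]
  congr 1
  rw [sgn_erase j l hj, sgn_erase l j hl]
  rcases lt_or_gt_of_ne hne with h | h
  · rw [if_pos h, if_neg (asymm h)]; ring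
  · rw [if_neg (asymm h), if_pos h]; ring

lemma contr_contr (j l : Fin m) (P : PForm m) :
    contrOp m j (contrOp m l P) = - contrOp m l (contrOp m j P) := by
  rcases eq_or_ne j l with rfl | hne
  · simp [contr_contr_self]
  funext I
  by_cases hj : j ∈ I <;> by_cases hl : l ∈ I <;>
    simp only [contr_apply, Pi.neg_apply, hj, hl, mem_insert, hne, hne.symm, if_pos, if_neg,
      ne_eq, not_false_eq_true, false_or, if_true, if_false, smul_zero, neg_zero, smul_ite,
      or_false]
  rw [Finset.insert_comm, smul_smul, smul_smul, ← neg_smul]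
  congr 1
  rw [sgn_insert j l hj, sgn_insert l j hl]
  rcases lt_or_gt_of_ne hne with h | h
  · rw [if_pos h, if_neg (asymm h)]; ring
  · rw [if_neg (asymm h), if_pos h]; ring

lemma contr_wedge (j l : Fin m) (P : PForm m) :
    contrOp m j (wedgeOp m l P) + wedgeOp m l (contrOp m j P) = if j = l then P else 0 := by
  rcases eq_or_ne j l with rfl | hne
  · funext I
    by_cases hj : j ∈ I
    · simp [wedge_apply, contr_apply, hj, Finset.insert_erase hj, sgn_erase_self,
        smul_smul, sgn_sq]
    · simp [wedge_apply, contr_apply, hj, Finset.erase_insert hj, sgn_insert_self,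
        smul_smul, sgn_sq]
  · funext I
    by_cases hj : j ∈ I <;> by_cases hl : l ∈ I <;>
      simp only [wedge_apply, contr_apply, Pi.add_apply, hj, hl, mem_insert, mem_erase,
        hne, hne.symm, ne_eq, not_false_eq_true, and_true, true_and, false_or, or_false,
        if_pos, if_neg, if_true, if_false, smul_zero, add_zero, zero_add, smul_ite,
        Pi.zero_apply, if_neg hne]
    rw [Finset.erase_insert_of_ne hne, smul_smul, smul_smul, ← add_smul]
    convert zero_smul ℝ _ using 2
    rw [sgn_insert j l hj, sgn_erase l j hl]
    rcases lt_or_gt_of_ne hne with h | h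
    · rw [if_pos h, if_neg (asymm h)]; ring
    · rw [if_neg (asymm h), if_pos h]; ring

lemma wedge_mulX (j l : Fin m) (P : PForm m) :
    wedgeOp m j (mulXOp m l P) = mulXOp m l (wedgeOp m j P) := by
  funext I
  by_cases hj : j ∈ I <;> simp [wedge_apply, mulX_apply, hj, mul_smul_comm]

lemma contr_mulX (j l : Fin m) (P : PForm m) :
    contrOp m j (mulXOp m l P) = mulXOp m l (contrOp m j P) := by
  funext I
  by_cases hj : j ∈ I <;> simp [contr_apply, mulX_apply, hj, mul_smul_comm]

lemma pderiv_wedge (j l : Fin m) (P : PForm m) :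
    pderivOp m j (wedgeOp m l P) = wedgeOp m l (pderivOp m j P) := by
  funext I
  by_cases hl : l ∈ I <;> simp [wedge_apply, pderivOp_apply, hl, map_smul]

lemma pderiv_contr (j l : Fin m) (P : PForm m) :
    pderivOp m j (contrOp m l P) = contrOp m l (pderivOp m j P) := by
  funext I
  by_cases hl : l ∈ I <;> simp [contr_apply, pderivOp_apply, hl, map_smul]

lemma pderiv_mulX (j l : Fin m) (P : PForm m) :
    pderivOp m j (mulXOp m l P) = (if j = l then P else 0) + mulXOp m l (pderivOp m j P) := by
  rcases eq_or_ne j l with rfl | h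
  · funext I
    simp [pderivOp_apply, mulX_apply, pderiv_mul, add_comm]
  · funext I
    simp [pderivOp_apply, mulX_apply, pderiv_mul, h, pderiv_X_of_ne h.symm]
end AuxOps

noncomputable section AuxOps2
variable {m : ℕ}

lemma dOp_eval (P : PForm m) : dOp m P = ∑ j, wedgeOp m j (pderivOp m j P) := by
  simp [dOp, LinearMap.sum_apply, LinearMap.comp_apply]

lemma dStarOp_eval (P : PForm m) : dStarOp m P = -∑ j, contrOp m j (pderivOp m j P) := by
  simp [dStarOp, LinearMap.sum_apply, LinearMap.comp_apply]

lemma xOp_eval (P : PForm m) : xOp m P = -∑ j, mulXOp m j (wedgeOp m j P) := by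
  simp [xOp, LinearMap.sum_apply, LinearMap.comp_apply]

lemma xStarOp_eval (P : PForm m) : xStarOp m P = ∑ j, mulXOp m j (contrOp m j P) := by
  simp [xStarOp, LinearMap.sum_apply, LinearMap.comp_apply]

lemma eulerOp_eval (P : PForm m) : eulerOp m P = ∑ j, mulXOp m j (pderivOp m j P) := by
  simp [eulerOp, LinearMap.sum_apply, LinearMap.comp_apply]

lemma skewEulerOp_eval (P : PForm m) : skewEulerOp m P = ∑ j, wedgeOp m j (contrOp m j P) := by
  simp [skewEulerOp, LinearMap.sum_apply, LinearMap.comp_apply]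

/-- single-term identity for `{d,x} = 0`. -/
lemma term_dx (j l : Fin m) (P : PForm m) :
    wedgeOp m j (pderivOp m j (mulXOp m l (wedgeOp m l P)))
      + mulXOp m l (wedgeOp m l (wedgeOp m j (pderivOp m j P))) = 0 := by
  rw [pderiv_mulX, map_add, pderiv_wedge, wedge_mulX, add_assoc,
    ← map_add (mulXOp m l), wedge_wedge j l (pderivOp m j P), neg_add_cancel, map_zero, add_zero]
  rcases eq_or_ne j l with rfl | h
  · rw [if_pos rfl, wedge_wedge_self]
  · rw [if_neg h, map_zero]

/-- single-term identity for `{d*,x*} = 0`. -/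
lemma term_dstar_xstar (j l : Fin m) (P : PForm m) :
    contrOp m j (pderivOp m j (mulXOp m l (contrOp m l P)))
      + mulXOp m l (contrOp m l (contrOp m j (pderivOp m j P))) = 0 := by
  rw [pderiv_mulX, map_add, pderiv_contr, contr_mulX, add_assoc,
    ← map_add (mulXOp m l), contr_contr j l (pderivOp m j P), neg_add_cancel, map_zero, add_zero]
  rcases eq_or_ne j l with rfl | h
  · rw [if_pos rfl, contr_contr_self]
  · rw [if_neg h, map_zero]

/-- single-term identity for `{d*,x}`. -/
lemma term_dstar_x (j l : Fin m) (P : PForm m) :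
    contrOp m j (pderivOp m j (mulXOp m l (wedgeOp m l P)))
      + mulXOp m l (wedgeOp m l (contrOp m j (pderivOp m j P)))
    = if j = l then contrOp m j (wedgeOp m j P) + mulXOp m j (pderivOp m j P) else 0 := by
  rw [pderiv_mulX, map_add, pderiv_wedge, contr_mulX, add_assoc,
    ← map_add (mulXOp m l), contr_wedge j l (pderivOp m j P)]
  rcases eq_or_ne j l with rfl | h
  · simp
  · simp [h]

/-- single-term identity for `{d,x*}`. -/
lemma term_d_xstar (j l : Fin m) (P : PForm m) :
    wedgeOp m j (pderivOp m j (mulXOp m l (contrOp m l P)))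
      + mulXOp m l (contrOp m l (wedgeOp m j (pderivOp m j P)))
    = if j = l then wedgeOp m j (contrOp m j P) + mulXOp m j (pderivOp m j P) else 0 := by
  rw [pderiv_mulX, map_add, pderiv_contr, wedge_mulX, add_assoc,
    ← map_add (mulXOp m l), add_comm (wedgeOp m j (contrOp m l (pderivOp m j P))),
    contr_wedge l j (pderivOp m j P)]
  rcases eq_or_ne j l with rfl | h
  · simp
  · simp [h, Ne.symm h]

lemma anticomm_d_x (P : PForm m) : dOp m (xOp m P) + xOp m (dOp m P) = 0 := by
  have e1 : dOp m (xOp m P)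
      = -∑ j, ∑ l, wedgeOp m j (pderivOp m j (mulXOp m l (wedgeOp m l P))) := by
    rw [xOp_eval, dOp_eval]
    simp [map_neg, map_sum]
  have e2 : xOp m (dOp m P)
      = -∑ j, ∑ l, mulXOp m l (wedgeOp m l (wedgeOp m j (pderivOp m j P))) := by
    rw [dOp_eval, xOp_eval]
    simp only [map_sum, neg_inj]
    rw [Finset.sum_comm]
  rw [e1, e2, ← neg_add, neg_eq_zero, ← Finset.sum_add_distrib]
  refine Finset.sum_eq_zero fun j _ => ?_
  rw [← Finset.sum_add_distrib]
  exact Finset.sum_eq_zero fun l _ => term_dx j l P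

lemma anticomm_dstar_xstar (P : PForm m) :
    dStarOp m (xStarOp m P) + xStarOp m (dStarOp m P) = 0 := by
  have e1 : dStarOp m (xStarOp m P)
      = -∑ j, ∑ l, contrOp m j (pderivOp m j (mulXOp m l (contrOp m l P))) := by
    rw [xStarOp_eval, dStarOp_eval]
    simp [map_sum]
  have e2 : xStarOp m (dStarOp m P)
      = -∑ j, ∑ l, mulXOp m l (contrOp m l (contrOp m j (pderivOp m j P))) := by
    rw [dStarOp_eval, xStarOp_eval]
    simp only [map_neg, map_sum, Finset.sum_neg_distrib, neg_inj]
    rw [Finset.sum_comm]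
  rw [e1, e2, ← neg_add, neg_eq_zero, ← Finset.sum_add_distrib]
  refine Finset.sum_eq_zero fun j _ => ?_
  rw [← Finset.sum_add_distrib]
  exact Finset.sum_eq_zero fun l _ => term_dstar_xstar j l P

lemma anticomm_dstar_x (P : PForm m) :
    dStarOp m (xOp m P) + xOp m (dStarOp m P)
      = (∑ j, contrOp m j (wedgeOp m j P)) + eulerOp m P := by
  have e1 : dStarOp m (xOp m P)
      = ∑ j, ∑ l, contrOp m j (pderivOp m j (mulXOp m l (wedgeOp m l P))) := by
    rw [xOp_eval, dStarOp_eval]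
    simp [map_neg, map_sum]
  have e2 : xOp m (dStarOp m P)
      = ∑ j, ∑ l, mulXOp m l (wedgeOp m l (contrOp m j (pderivOp m j P))) := by
    rw [dStarOp_eval, xOp_eval]
    simp only [map_neg, map_sum, Finset.sum_neg_distrib, neg_neg]
    rw [Finset.sum_comm]
  rw [e1, e2, ← Finset.sum_add_distrib, eulerOp_eval, ← Finset.sum_add_distrib]
  refine Finset.sum_congr rfl fun j _ => ?_
  rw [← Finset.sum_add_distrib]
  calc (∑ l, (contrOp m j (pderivOp m j (mulXOp m l (wedgeOp m l P)))
          + mulXOp m l (wedgeOp m l (contrOp m j (pderivOp m j P)))))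
      = ∑ l, (if j = l then contrOp m j (wedgeOp m j P) + mulXOp m j (pderivOp m j P) else 0) :=
        Finset.sum_congr rfl fun l _ => term_dstar_x j l P
    _ = contrOp m j (wedgeOp m j P) + mulXOp m j (pderivOp m j P) := by
        rw [Finset.sum_ite_eq]; simp

lemma anticomm_d_xstar (P : PForm m) :
    dOp m (xStarOp m P) + xStarOp m (dOp m P)
      = skewEulerOp m P + eulerOp m P := by
  have e1 : dOp m (xStarOp m P)
      = ∑ j, ∑ l, wedgeOp m j (pderivOp m j (mulXOp m l (contrOp m l P))) := by
    rw [xStarOp_eval, dOp_eval]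
    simp [map_sum]
  have e2 : xStarOp m (dOp m P)
      = ∑ j, ∑ l, mulXOp m l (contrOp m l (wedgeOp m j (pderivOp m j P))) := by
    rw [dOp_eval, xStarOp_eval]
    simp only [map_sum]
    rw [Finset.sum_comm]
  rw [e1, e2, ← Finset.sum_add_distrib, skewEulerOp_eval, eulerOp_eval, ← Finset.sum_add_distrib]
  refine Finset.sum_congr rfl fun j _ => ?_
  rw [← Finset.sum_add_distrib]
  calc (∑ l, (wedgeOp m j (pderivOp m j (mulXOp m l (contrOp m l P)))
          + mulXOp m l (contrOp m l (wedgeOp m j (pderivOp m j P)))))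
      = ∑ l, (if j = l then wedgeOp m j (contrOp m j P) + mulXOp m j (pderivOp m j P) else 0) :=
        Finset.sum_congr rfl fun l _ => term_d_xstar j l P
    _ = wedgeOp m j (contrOp m j P) + mulXOp m j (pderivOp m j P) := by
        rw [Finset.sum_ite_eq]; simp

end AuxOps2

noncomputable section AuxOps3
variable {m : ℕ}

lemma euler_monomial (v : Fin m →₀ ℕ) (c : ℝ) :
    ∑ j, X j * pderiv j (monomial v c) = (∑ j, v j) • monomial v c := by
  rw [Finset.sum_smul]
  refine Finset.sum_congr rfl fun j _ => ?_
  rw [pderiv_monomial]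
  by_cases hj : v j = 0
  · simp [hj]
  · have hle : Finsupp.single j 1 ≤ v := by
      rw [Finsupp.single_le_iff]
      omega
    have hX : (X j : MvPolynomial (Fin m) ℝ) = monomial (Finsupp.single j 1) 1 := rfl
    rw [hX, monomial_mul, add_tsub_cancel_of_le hle, one_mul]
    rw [← map_nsmul (monomial v) (v j) c]
    congr 1
    simp [nsmul_eq_mul, mul_comm]

lemma euler_poly {p : MvPolynomial (Fin m) ℝ} {n : ℕ} (hp : p.IsHomogeneous n) :
    ∑ j, X j * pderiv j p = n • p := by
  calc ∑ j, X j * pderiv j p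
      = ∑ j, X j * pderiv j (∑ v ∈ p.support, monomial v (coeff v p)) := by
        rw [← p.as_sum]
    _ = ∑ v ∈ p.support, ∑ j, X j * pderiv j (monomial v (coeff v p)) := by
        simp_rw [map_sum, Finset.mul_sum]
        rw [Finset.sum_comm]
    _ = ∑ v ∈ p.support, n • monomial v (coeff v p) := by
        refine Finset.sum_congr rfl fun v hv => ?_
        rw [euler_monomial]
        congr 1
        have hc : coeff v p ≠ 0 := (mem_support_iff).1 hv
        have hw := hp hc
        change Finsupp.weight (fun _ => (1 : ℕ)) v = n at hw
        rw [← Finsupp.degree_eq_weight_one] at hw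
        rw [← hw]
        unfold Finsupp.degree
        exact (Finset.sum_subset (Finset.subset_univ _)
          (fun x _ hx => Finsupp.notMem_support_iff.mp hx)).symm
    _ = n • p := by rw [← Finset.smul_sum, ← p.as_sum]

lemma eulerOp_of_hom {n : ℕ} {P : PForm m} (h : IsHomForm m n P) :
    eulerOp m P = n • P := by
  rw [eulerOp_eval]
  funext I
  rw [Finset.sum_apply]
  simp only [mulX_apply, pderivOp_apply]
  exact euler_poly (h I)

lemma skewEulerOp_card (P : PForm m) (I : Finset (Fin m)) :
    skewEulerOp m P I = I.card • P I := by
  rw [skewEulerOp_eval, Finset.sum_apply]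
  have : ∀ j, wedgeOp m j (contrOp m j P) I = if j ∈ I then P I else 0 := by
    intro j
    by_cases hj : j ∈ I
    · simp [wedge_apply, contr_apply, hj, Finset.insert_erase hj, sgn_erase_self,
        smul_smul, sgn_sq]
    · simp [wedge_apply, hj]
  rw [Finset.sum_congr rfl fun j _ => this j, Finset.sum_ite_mem, Finset.univ_inter,
    Finset.sum_const]

lemma skewEulerOp_of_sform {s : ℕ} {P : PForm m} (h : IsSForm m s P) :
    skewEulerOp m P = s • P := by
  funext I
  rw [skewEulerOp_card]
  by_cases hc : I.card = s
  · rw [hc]; rfl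
  · simp [Pi.smul_apply, h I hc]

lemma contr_wedge_sum (P : PForm m) :
    (∑ j, contrOp m j (wedgeOp m j P)) = m • P - skewEulerOp m P := by
  rw [skewEulerOp_eval, eq_sub_iff_add_eq, ← Finset.sum_add_distrib]
  have : ∀ j, contrOp m j (wedgeOp m j P) + wedgeOp m j (contrOp m j P) = P := by
    intro j
    have := contr_wedge j j P
    rwa [if_pos rfl] at this
  rw [Finset.sum_congr rfl fun j _ => this j, Finset.sum_const, Finset.card_univ,
    Fintype.card_fin]

end AuxOps3

noncomputable section AuxOps4
variable {m s n : ℕ}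

lemma d_x_zero {P : PForm m} (hd : dOp m P = 0) : dOp m (xOp m P) = 0 := by
  have h := anticomm_d_x P
  rwa [hd, map_zero, add_zero] at h

lemma dstar_xstar_zero {P : PForm m} (hds : dStarOp m P = 0) :
    dStarOp m (xStarOp m P) = 0 := by
  have h := anticomm_dstar_xstar P
  rwa [hds, map_zero, add_zero] at h

lemma dstar_x_eig {P : PForm m} (hP : P ∈ Hset m s n) :
    dStarOp m (xOp m P) = (((n : ℝ) + m) - s) • P := by
  obtain ⟨h1, h2, _, h4⟩ := hP
  have h := anticomm_dstar_x P
  rw [h4, map_zero, add_zero, contr_wedge_sum, eulerOp_of_hom h2,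
    skewEulerOp_of_sform h1] at h
  rw [h, ← Nat.cast_smul_eq_nsmul ℝ m P, ← Nat.cast_smul_eq_nsmul ℝ s P,
    ← Nat.cast_smul_eq_nsmul ℝ n P]
  module

lemma d_xstar_eig {P : PForm m} (hP : P ∈ Hset m s n) :
    dOp m (xStarOp m P) = ((n : ℝ) + s) • P := by
  obtain ⟨h1, h2, h3, _⟩ := hP
  have h := anticomm_d_xstar P
  rw [h3, map_zero, add_zero, eulerOp_of_hom h2, skewEulerOp_of_sform h1] at h
  rw [h, ← Nat.cast_smul_eq_nsmul ℝ s P, ← Nat.cast_smul_eq_nsmul ℝ n P]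
  module

lemma Hset_smul {P : PForm m} (c : ℝ) (hP : P ∈ Hset m s n) : c • P ∈ Hset m s n := by
  obtain ⟨h1, h2, h3, h4⟩ := hP
  refine ⟨fun I hI => ?_, fun I d hd => ?_, ?_, ?_⟩
  · rw [Pi.smul_apply, h1 I hI, smul_zero]
  · refine h2 I (d := d) fun h0 => hd ?_
    rw [Pi.smul_apply, MvPolynomial.coeff_smul, h0, smul_zero]
  · rw [map_smul, h3, smul_zero]
  · rw [map_smul, h4, smul_zero]

lemma Hset_add {P Q : PForm m} (hP : P ∈ Hset m s n) (hQ : Q ∈ Hset m s n) :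
    P + Q ∈ Hset m s n := by
  obtain ⟨h1, h2, h3, h4⟩ := hP
  obtain ⟨g1, g2, g3, g4⟩ := hQ
  refine ⟨fun I hI => ?_, fun I => ?_, ?_, ?_⟩
  · rw [Pi.add_apply, h1 I hI, g1 I hI, add_zero]
  · rw [Pi.add_apply]
    exact (h2 I).add (g2 I)
  · rw [map_add, h3, g3, add_zero]
  · rw [map_add, h4, g4, add_zero]

lemma Hset_sub {P Q : PForm m} (hP : P ∈ Hset m s n) (hQ : Q ∈ Hset m s n) :
    P - Q ∈ Hset m s n := by
  rw [sub_eq_add_neg, ← neg_one_smul ℝ Q]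
  exact Hset_add hP (Hset_smul _ hQ)

end AuxOps4

/-- `xH^s_{k-1} + x*H^s_{k-1} = (x+x*)H^s_{k-1} ⊕ M_{s,k}`. -/
theorem xH_plus_xStarH_decomp (m s k : ℕ) (hs : 1 ≤ s) (hsm : s ≤ m - 1) (hk : 1 ≤ k) :
    ({Q : PForm m | ∃ P₁ ∈ Hset m s (k - 1), ∃ P₂ ∈ Hset m s (k - 1),
        Q = xOp m P₁ + xStarOp m P₂}
      = {Q : PForm m | ∃ A ∈ Hset m s (k - 1), ∃ B ∈ Mset m s k,
          Q = (xOp m + xStarOp m) A + B}) ∧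
    (∀ A ∈ Hset m s (k - 1), ∀ B ∈ Mset m s k,
        (xOp m + xStarOp m) A + B = 0 → (xOp m + xStarOp m) A = 0 ∧ B = 0) := by
  have hm2 : 2 ≤ m := by omega
  have hcast : ((k - 1 : ℕ) : ℝ) = (k : ℝ) - 1 := by
    rw [Nat.cast_sub hk, Nat.cast_one]
  have hk1 : (1 : ℝ) ≤ (k : ℝ) := by exact_mod_cast hk
  have hm2' : (2 : ℝ) ≤ (m : ℝ) := by exact_mod_cast hm2
  have hab0 : ((k : ℝ) - 1 + m - s) + ((k : ℝ) - 1 + s) ≠ 0 := by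
    have : (0:ℝ) < ((k : ℝ) - 1 + m - s) + ((k : ℝ) - 1 + s) := by linarith
    exact ne_of_gt this
  have hDx0 : ∀ P ∈ Hset m s (k - 1), dOp m (xOp m P) = 0 :=
    fun P hP => d_x_zero hP.2.2.1
  have hDsxs0 : ∀ P ∈ Hset m s (k - 1), dStarOp m (xStarOp m P) = 0 :=
    fun P hP => dstar_xstar_zero hP.2.2.2
  have hDsx : ∀ P ∈ Hset m s (k - 1),
      dStarOp m (xOp m P) = ((k : ℝ) - 1 + m - s) • P := by
    intro P hP
    rw [dstar_x_eig hP, hcast]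
  have hDxs : ∀ P ∈ Hset m s (k - 1),
      dOp m (xStarOp m P) = ((k : ℝ) - 1 + s) • P := by
    intro P hP
    rw [d_xstar_eig hP, hcast]
  have hc3 : ((k : ℝ) - 1 + (m : ℝ) + ((k : ℝ) - 1)) ≠ 0 := by
    have : (0:ℝ) < (k : ℝ) - 1 + (m : ℝ) + ((k : ℝ) - 1) := by linarith
    exact ne_of_gt this
  constructor
  · ext Q
    simp only [Set.mem_setOf_eq]
    constructor
    · rintro ⟨P₁, hP₁, P₂, hP₂, rfl⟩
      refine ⟨(((k : ℝ) - 1 + m - s) + ((k : ℝ) - 1 + s))⁻¹ •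
          (((k : ℝ) - 1 + m - s) • P₁ + ((k : ℝ) - 1 + s) • P₂),
        Hset_smul _ (Hset_add (Hset_smul _ hP₁) (Hset_smul _ hP₂)),
        (((k : ℝ) - 1 + m - s) • xStarOp m - ((k : ℝ) - 1 + s) • xOp m)
          ((((k : ℝ) - 1 + m - s) + ((k : ℝ) - 1 + s))⁻¹ • (P₂ - P₁)),
        ⟨(((k : ℝ) - 1 + m - s) + ((k : ℝ) - 1 + s))⁻¹ • (P₂ - P₁),
          Hset_smul _ (Hset_sub hP₂ hP₁), rfl⟩, ?_⟩
      simp only [LinearMap.add_apply, LinearMap.sub_apply, LinearMap.smul_apply,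
        map_add, map_smul, map_sub]
      match_scalars
      all_goals field_simp
      all_goals ring
    · rintro ⟨A, hA, B, ⟨B₀, hB₀, rfl⟩, rfl⟩
      refine ⟨A + (-((k : ℝ) - 1 + s)) • B₀, Hset_add hA (Hset_smul _ hB₀),
        A + ((k : ℝ) - 1 + m - s) • B₀, Hset_add hA (Hset_smul _ hB₀), ?_⟩
      simp only [LinearMap.add_apply, LinearMap.sub_apply, LinearMap.smul_apply,
        map_add, map_smul, map_sub]
      module
  · rintro A hA B ⟨B₀, hB₀, rfl⟩ h0
    have hDtot : dOp m ((xOp m + xStarOp m) A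
          + (((k : ℝ) - 1 + m - s) • xStarOp m - ((k : ℝ) - 1 + s) • xOp m) B₀)
        + dStarOp m ((xOp m + xStarOp m) A
          + (((k : ℝ) - 1 + m - s) • xStarOp m - ((k : ℝ) - 1 + s) • xOp m) B₀)
        = (((k : ℝ) - 1 + m - s) + ((k : ℝ) - 1 + s)) • A := by
      simp only [LinearMap.add_apply, LinearMap.sub_apply, LinearMap.smul_apply,
        map_add, map_smul, map_sub]
      rw [hDx0 A hA, hDsxs0 A hA, hDsx A hA, hDxs A hA,
        hDx0 B₀ hB₀, hDsxs0 B₀ hB₀, hDsx B₀ hB₀, hDxs B₀ hB₀]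
      module
    rw [h0, map_zero, map_zero, add_zero] at hDtot
    have hA0 : A = 0 := by
      calc A = (((k : ℝ) - 1 + m - s) + ((k : ℝ) - 1 + s))⁻¹ •
            ((((k : ℝ) - 1 + m - s) + ((k : ℝ) - 1 + s)) • A) := by
              rw [smul_smul, inv_mul_cancel₀ hab0, one_smul]
        _ = (((k : ℝ) - 1 + m - s) + ((k : ℝ) - 1 + s))⁻¹ • (0 : PForm m) := by
              rw [← hDtot]
        _ = 0 := smul_zero _
    have hSA : (xOp m + xStarOp m) A = 0 := by rw [hA0, map_zero]
    refine ⟨hSA, ?_⟩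
    rw [hSA, zero_add] at h0
    exact h0
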